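/- Let q : ℝ × ℝ → ℂ be twice continuously differentiable in the variables (x,t), and let λ be a nonzero complex number. Define the 2×2 complex-matrix-valued functions U = λ·[[1, q_x],[conj(q)_x, −1]] and V = [[−(λ/2)|q|² − 1/(4λ), −(λ/2)|q|² q_x + q/2],[−(λ/2)|q|² conj(q)_x − conj(q)/2, (λ/2)|q|² + 1/(4λ)]]. Then at every point (x,t), the zero-curvature equation U_t − V_x + U·V − V·U = 0 holds if and only if the complex short pulse equation q_{xt} + q + (1/2)(|q|² q_x)_x = 0 holds at that point. -/

import Mathlib

/-!
Entrywise, `U_t - V_x + [U, V]` vanishes identically on the diagonal: there `V_x` is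
`∓ (λ/2) (|q|²)_x = ∓ (λ/2) (q_x q̄ + q q̄_x)`, which is also the diagonal of `[U, V]`. Off the
diagonal, the `1/(4λ)` terms of `V` contribute `q_x/2` and `-q̄_x/2` to the commutator, cancelling
the `x`-derivatives of `± q/2`, and what remains is `λ E` and `λ Ē` with
`E = q_xt + q + ½ (|q|² q_x)_x`. As `λ ≠ 0`, the curvature vanishes exactly when `E` does.
-/

open Complex

/-- Partial derivative in the first (space) variable. -/
noncomputable def pdx (F : ℝ → ℝ → ℂ) (x t : ℝ) : ℂ := deriv (fun x' => F x' t) x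

/-- Partial derivative in the second (time) variable. -/
noncomputable def pdt (F : ℝ → ℝ → ℂ) (x t : ℝ) : ℂ := deriv (fun t' => F x t') t

/-- Entrywise partial derivative in the first variable of a matrix-valued function. -/
noncomputable def pdxM (F : ℝ → ℝ → Matrix (Fin 2) (Fin 2) ℂ) (x t : ℝ) :
    Matrix (Fin 2) (Fin 2) ℂ := Matrix.of fun i j => deriv (fun x' => F x' t i j) x

/-- Entrywise partial derivative in the second variable of a matrix-valued function. -/
noncomputable def pdtM (F : ℝ → ℝ → Matrix (Fin 2) (Fin 2) ℂ) (x t : ℝ) :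
    Matrix (Fin 2) (Fin 2) ℂ := Matrix.of fun i j => deriv (fun t' => F x t' i j) t

open ComplexConjugate

lemma HasDerivAt.conj {f : ℝ → ℂ} {f' : ℂ} {x : ℝ} (hf : HasDerivAt f f' x) :
    HasDerivAt (fun y => conj (f y)) (conj f') x :=
  hf.star

lemma HasDerivAt.ofReal_norm_sq {f : ℝ → ℂ} {f' : ℂ} {x : ℝ} (hf : HasDerivAt f f' x) :
    HasDerivAt (fun y => (‖f y‖ : ℂ) ^ 2) (f' * conj (f x) + f x * conj f') x := by
  simpa only [← mul_conj'] using hf.fun_mul hf.conj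

lemma pdx_conj (F : ℝ → ℝ → ℂ) : pdx (fun x t => conj (F x t)) = fun x t => conj (pdx F x t) :=
  funext₂ fun _ _ => deriv.star

lemma pdt_conj (F : ℝ → ℝ → ℂ) : pdt (fun x t => conj (F x t)) = fun x t => conj (pdt F x t) :=
  funext₂ fun _ _ => deriv.star

lemma hasDerivAt_uncurry_left {F : ℝ → ℝ → ℂ} {x t : ℝ}
    (hF : DifferentiableAt ℝ (Function.uncurry F) (x, t)) :
    HasDerivAt (fun y => F y t) (fderiv ℝ (Function.uncurry F) (x, t) (1, 0)) x :=
  hF.hasFDerivAt.comp_hasDerivAt_of_eq x ((hasDerivAt_id' x).prodMk (hasDerivAt_const x t)) rfl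

lemma hasDerivAt_pdx {F : ℝ → ℝ → ℂ} {x t : ℝ}
    (hF : DifferentiableAt ℝ (Function.uncurry F) (x, t)) :
    HasDerivAt (fun y => F y t) (pdx F x t) x :=
  (hasDerivAt_uncurry_left hF).differentiableAt.hasDerivAt

lemma contDiff_uncurry_pdx {F : ℝ → ℝ → ℂ} {n : WithTop ℕ∞}
    (hF : ContDiff ℝ (n + 1) (Function.uncurry F)) :
    ContDiff ℝ n (Function.uncurry (pdx F)) := by
  have hpdx : Function.uncurry (pdx F) = fun p => fderiv ℝ (Function.uncurry F) p (1, 0) :=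
    funext fun p => (hasDerivAt_uncurry_left (hF.differentiable (by simp) p)).deriv
  rw [hpdx]
  exact (hF.fderiv_right le_rfl).clm_apply contDiff_const


lemma pdxM_of_fin_two (a b c d : ℝ → ℝ → ℂ) (x t : ℝ) :
    pdxM (fun x t => !![a x t, b x t; c x t, d x t]) x t =
      !![pdx a x t, pdx b x t; pdx c x t, pdx d x t] := by
  ext i j
  fin_cases i <;> fin_cases j <;> simp [pdxM, pdx]

lemma pdtM_of_fin_two (a b c d : ℝ → ℝ → ℂ) (x t : ℝ) :
    pdtM (fun x t => !![a x t, b x t; c x t, d x t]) x t =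
      !![pdt a x t, pdt b x t; pdt c x t, pdt d x t] := by
  ext i j
  fin_cases i <;> fin_cases j <;> simp [pdtM, pdt]

lemma pdtM_const_smul (c : ℂ) (F : ℝ → ℝ → Matrix (Fin 2) (Fin 2) ℂ) (x t : ℝ) :
    pdtM (fun x t => c • F x t) x t = c • pdtM F x t := by
  ext i j
  simp [pdtM, deriv_const_mul_field]

noncomputable def cspLaxU (lam qx : ℂ) : Matrix (Fin 2) (Fin 2) ℂ :=
  lam • !![1, qx; conj qx, -1]

noncomputable def cspLaxV (lam q qx : ℂ) : Matrix (Fin 2) (Fin 2) ℂ :=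
  !![-(lam/2) * (‖q‖ : ℂ)^2 - 1/(4*lam), -(lam/2) * (‖q‖ : ℂ)^2 * qx + q / 2;
     -(lam/2) * (‖q‖ : ℂ)^2 * conj qx - conj q / 2, (lam/2) * (‖q‖ : ℂ)^2 + 1/(4*lam)]

/-- `∂ₓ (cspLaxV lam q q_x)` in terms of the values `q, qx, qxx` of `q, q_x, q_xx`;
`nx` is the value of `(|q|²)_x`. -/
noncomputable def cspLaxVx (lam q qx qxx : ℂ) : Matrix (Fin 2) (Fin 2) ℂ :=
  let nx := qx * conj q + q * conj qx
  !![-(lam/2) * nx, -(lam/2) * (nx * qx + (‖q‖ : ℂ)^2 * qxx) + qx / 2;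
     -(lam/2) * (nx * conj qx + (‖q‖ : ℂ)^2 * conj qxx) - conj qx / 2, (lam/2) * nx]

lemma pdtM_cspLaxU (lam : ℂ) (p : ℝ → ℝ → ℂ) (x t : ℝ) :
    pdtM (fun x t => cspLaxU lam (p x t)) x t = lam • !![0, pdt p x t; conj (pdt p x t), 0] := by
  unfold cspLaxU
  rw [pdtM_const_smul, pdtM_of_fin_two, pdt_conj]
  simp [pdt]

lemma pdxM_cspLaxV {q p : ℝ → ℝ → ℂ} {x t : ℝ} {qxx : ℂ} (lam : ℂ)
    (hq : HasDerivAt (fun y => q y t) (p x t) x) (hp : HasDerivAt (fun y => p y t) qxx x) :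
    pdxM (fun x t => cspLaxV lam (q x t) (p x t)) x t = cspLaxVx lam (q x t) (p x t) qxx := by
  have hn := hq.ofReal_norm_sq
  unfold cspLaxV
  rw [pdxM_of_fin_two]
  simp only [pdx]
  rw [((hn.const_mul _).sub_const _).deriv,
    (((hn.const_mul _).fun_mul hp).fun_add (hq.div_const 2)).deriv,
    (((hn.const_mul _).fun_mul hp.conj).fun_sub (hq.conj.div_const 2)).deriv,
    ((hn.const_mul _).add_const _).deriv]
  simp only [cspLaxVx, EmbeddingLike.apply_eq_iff_eq, Matrix.vecCons_inj, and_true, true_and]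
  constructor <;> ring

lemma antidiag_conj_eq_zero_iff (z : ℂ) :
    (!![0, z; conj z, 0] : Matrix (Fin 2) (Fin 2) ℂ) = 0 ↔ z = 0 := by
  refine ⟨fun h => by simpa using congrFun (congrFun h 0) 1, fun h => ?_⟩
  ext i j
  fin_cases i <;> fin_cases j <;> simp [h]

lemma cspLax_zeroCurvature_iff {lam : ℂ} (hlam : lam ≠ 0) (q qx qxx qxt : ℂ) :
    lam • !![0, qxt; conj qxt, 0] - cspLaxVx lam q qx qxx
        + cspLaxU lam qx * cspLaxV lam q qx - cspLaxV lam q qx * cspLaxU lam qx = 0 ↔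
      qxt + q + 1/2 * ((qx * conj q + q * conj qx) * qx + (‖q‖ : ℂ)^2 * qxx) = 0 := by
  set E := qxt + q + 1/2 * ((qx * conj q + q * conj qx) * qx + (‖q‖ : ℂ)^2 * qxx) with hE
  have hcurv : lam • !![0, qxt; conj qxt, 0] - cspLaxVx lam q qx qxx
        + cspLaxU lam qx * cspLaxV lam q qx - cspLaxV lam q qx * cspLaxU lam qx
      = lam • !![0, E; conj E, 0] := by
    ext i j
    fin_cases i <;> fin_cases j <;>
      simp [cspLaxU, cspLaxV, cspLaxVx, hE, map_ofNat] <;> field_simp <;> ring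
  rw [hcurv, smul_eq_zero, or_iff_right hlam, antidiag_conj_eq_zero_iff]

theorem csp_zero_curvature_iff
    (q : ℝ → ℝ → ℂ)
    (hq : ContDiff ℝ 2 (fun p : ℝ × ℝ => q p.1 p.2))
    (lam : ℂ) (hlam : lam ≠ 0)
    (U V : ℝ → ℝ → Matrix (Fin 2) (Fin 2) ℂ)
    (hU : ∀ x t, U x t = lam • Matrix.of
      ![![1, pdx q x t],
        ![pdx (fun x' t' => starRingEnd ℂ (q x' t')) x t, -1]])
    (hV : ∀ x t, V x t = Matrix.of
      ![![-(lam/2) * (‖q x t‖ : ℂ)^2 - 1/(4*lam),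
          -(lam/2) * (‖q x t‖ : ℂ)^2 * pdx q x t + q x t / 2],
        ![-(lam/2) * (‖q x t‖ : ℂ)^2 *
            pdx (fun x' t' => starRingEnd ℂ (q x' t')) x t - starRingEnd ℂ (q x t) / 2,
          (lam/2) * (‖q x t‖ : ℂ)^2 + 1/(4*lam)]]) :
    ∀ x t,
      (pdtM U x t - pdxM V x t + U x t * V x t - V x t * U x t = 0) ↔
      (pdt (pdx q) x t + q x t
        + (1/2) * pdx (fun x' t' => (‖q x' t'‖ : ℂ)^2 * pdx q x' t') x t = 0) := by
  intro x t
  have hqx : HasDerivAt (fun y => q y t) (pdx q x t) x :=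
    hasDerivAt_pdx (hq.differentiable (by norm_num) (x, t))
  have hqxx : HasDerivAt (fun y => pdx q y t) (pdx (pdx q) x t) x :=
    hasDerivAt_pdx ((contDiff_uncurry_pdx (n := 1) hq).differentiable one_ne_zero (x, t))
  obtain rfl : U = fun x t => cspLaxU lam (pdx q x t) := by
    funext x t; rw [hU, pdx_conj]; rfl
  obtain rfl : V = fun x t => cspLaxV lam (q x t) (pdx q x t) := by
    funext x t; rw [hV, pdx_conj]; rfl
  have hWx : pdx (fun x t => (‖q x t‖ : ℂ)^2 * pdx q x t) x t = _ :=
    (hqx.ofReal_norm_sq.fun_mul hqxx).deriv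
  rw [pdtM_cspLaxU, pdxM_cspLaxV lam hqx hqxx, hWx]
  exact cspLax_zeroCurvature_iff hlam _ _ _ _
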